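/- arXiv:funct-an/9702019 — 6 statements merged into one kernel-verified Lean document; each statement's English description precedes it below -/
import Mathlib

section
/- If T is a trace-class operator on a separable Hilbert space H, and (U_k)_{k=1}^∞ is a sequence of isometries on H with mutually orthogonal ranges (i.e., U_j* U_k = 0 for j ≠ k), then the series ∑_{k=1}^∞ U_k* T U_k converges in trace-class norm to a trace-class operator. -/
noncomputable section

open Filter ContinuousLinearMap

variable {H : Type*} [NormedAddCommGroup H] [InnerProductSpace ℂ H] [CompleteSpace H]

/-- The trace norm of a bounded operator on a Hilbert space, expressed as the supremum
over finite orthonormal families `(e i)`, `(f i)` of `∑ i, ‖⟪T (e i), f i⟫‖`. -/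
noncomputable def traceNorm (T : H →L[ℂ] H) : ENNReal :=
  ⨆ (m : ℕ) (e : Fin m → H) (f : Fin m → H) (_ : Orthonormal ℂ e) (_ : Orthonormal ℂ f),
    ∑ i, (‖(inner ℂ (T (e i)) (f i) : ℂ)‖₊ : ENNReal)

/-- A bounded operator is trace class if its trace norm is finite. -/
def IsTraceClass (T : H →L[ℂ] H) : Prop := traceNorm T < ⊤

/-! The trace norm is a supremum of functions that are continuous for the operator norm, hence
lower semicontinuous, and it dominates the operator norm. So a series whose trace norms are
summable converges in operator norm, and by lower semicontinuity also in trace norm. For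
`∑ Uₖ* T Uₖ` the trace norms are summable: orthonormal families `(eₖ), (fₖ)` pushed forward along
isometries with orthogonal ranges merge into one pair of orthonormal families `(Uₖ eₖ), (Uₖ fₖ)`,
so `∑ₖ ‖Uₖ* T Uₖ‖₁ ≤ ‖T‖₁`. -/

open scoped ENNReal InnerProductSpace

theorem ENNReal.sum_iSup_le_iSup_sum {α ι : Type*} [Nonempty ι] (s : Finset α)
    (f : α → ι → ℝ≥0∞) :
    ∑ a ∈ s, ⨆ i, f a i ≤ ⨆ g : α → ι, ∑ a ∈ s, f a (g a) := by
  classical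
  induction s using Finset.cons_induction with
  | empty => simp
  | cons a s ha ih =>
    calc ∑ b ∈ s.cons a ha, ⨆ i, f b i
        ≤ (⨆ i, f a i) + ⨆ g : α → ι, ∑ b ∈ s, f b (g b) := by
          rw [Finset.sum_cons]; gcongr
      _ = ⨆ (i) (g : α → ι), f a i + ∑ b ∈ s, f b (g b) := by
          rw [ENNReal.iSup_add]
          simp only [ENNReal.add_iSup]
      _ ≤ ⨆ g : α → ι, ∑ b ∈ s.cons a ha, f b (g b) := by
          refine iSup₂_le fun i g => le_iSup_of_le (Function.update g a i) ?_
          rw [Finset.sum_cons, Function.update_self]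
          gcongr with b hb
          rw [Function.update_of_ne (ne_of_mem_of_not_mem hb ha)]

section TraceNorm

variable {E : Type*} [NormedAddCommGroup E] [InnerProductSpace ℂ E]

structure OrthonormalPair (E : Type*) [NormedAddCommGroup E] [InnerProductSpace ℂ E] where
  m : ℕ
  e : Fin m → E
  f : Fin m → E
  orthonormal_e : Orthonormal ℂ e
  orthonormal_f : Orthonormal ℂ f

instance : Nonempty (OrthonormalPair E) :=
  ⟨⟨0, Fin.elim0, Fin.elim0, .of_isEmpty _, .of_isEmpty _⟩⟩

def OrthonormalPair.pairing (p : OrthonormalPair E) (T : E →L[ℂ] E) : ℝ≥0∞ :=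
  ∑ i, ‖⟪T (p.e i), p.f i⟫_ℂ‖₊

theorem traceNorm_eq_iSup_pairing (T : E →L[ℂ] E) :
    traceNorm T = ⨆ p : OrthonormalPair E, p.pairing T :=
  le_antisymm
    (iSup_le fun m => iSup_le fun e => iSup_le fun f => iSup_le fun he => iSup_le fun hf =>
      le_iSup (fun p : OrthonormalPair E => p.pairing T) ⟨m, e, f, he, hf⟩)
    (iSup_le fun p => le_iSup_of_le p.m <| le_iSup_of_le p.e <| le_iSup_of_le p.f <|
      le_iSup_of_le p.orthonormal_e <| le_iSup_of_le p.orthonormal_f le_rfl)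

theorem sum_nnnorm_inner_le_traceNorm {ι : Type*} [Fintype ι] (T : E →L[ℂ] E) {e f : ι → E}
    (he : Orthonormal ℂ e) (hf : Orthonormal ℂ f) :
    ∑ i, (‖⟪T (e i), f i⟫_ℂ‖₊ : ℝ≥0∞) ≤ traceNorm T := by
  let σ := (Fintype.equivFin ι).symm
  rw [← σ.sum_comp]
  exact le_iSup_of_le _ <| le_iSup_of_le (e ∘ σ) <| le_iSup_of_le (f ∘ σ) <|
    le_iSup_of_le (he.comp σ σ.injective) <| le_iSup_of_le (hf.comp σ σ.injective) le_rfl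

theorem nnnorm_le_traceNorm (A : E →L[ℂ] E) : (‖A‖₊ : ℝ≥0∞) ≤ traceNorm A := by
  rcases eq_or_ne (traceNorm A) ⊤ with h | h
  · simp [h]
  rw [← ENNReal.ofReal_toReal h, ← ENNReal.ofReal_coe_nnreal, coe_nnnorm]
  refine ENNReal.ofReal_le_ofReal (opNorm_le_of_re_inner_le ENNReal.toReal_nonneg
    fun x y hx hy => (RCLike.re_le_norm _).trans ?_)
  have hxy := sum_nnnorm_inner_le_traceNorm A (e := fun _ : Unit => x) (f := fun _ => y)
    (by simpa using hx) (by simpa using hy)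
  simpa using ENNReal.toReal_mono h hxy

theorem traceNorm_zero : traceNorm (0 : E →L[ℂ] E) = 0 := by
  simp [traceNorm_eq_iSup_pairing, OrthonormalPair.pairing]

theorem traceNorm_add_le (A B : E →L[ℂ] E) : traceNorm (A + B) ≤ traceNorm A + traceNorm B := by
  simp only [traceNorm_eq_iSup_pairing]
  refine iSup_le fun p => le_trans ?_ (add_le_add (le_iSup _ p) (le_iSup _ p))
  simp only [OrthonormalPair.pairing, ← Finset.sum_add_distrib, add_apply, inner_add_left]
  gcongr
  exact_mod_cast nnnorm_add_le _ _

theorem traceNorm_sum_le {ι : Type*} (s : Finset ι) (A : ι → E →L[ℂ] E) :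
    traceNorm (∑ k ∈ s, A k) ≤ ∑ k ∈ s, traceNorm (A k) :=
  Finset.le_sum_of_subadditive _ traceNorm_zero.le traceNorm_add_le s A

theorem OrthonormalPair.continuous_pairing (p : OrthonormalPair E) : Continuous p.pairing := by
  unfold OrthonormalPair.pairing
  fun_prop

theorem lowerSemicontinuous_traceNorm :
    LowerSemicontinuous (traceNorm : (E →L[ℂ] E) → ℝ≥0∞) := by
  rw [funext traceNorm_eq_iSup_pairing]
  exact lowerSemicontinuous_iSup fun p => p.continuous_pairing.lowerSemicontinuous

theorem traceNorm_tsum_le {ι : Type*} {A : ι → E →L[ℂ] E} (hA : Summable A) :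
    traceNorm (∑' k, A k) ≤ ∑' k, traceNorm (A k) :=
  (lowerSemicontinuous_traceNorm.isClosed_preimage _).mem_of_tendsto hA.hasSum <|
    Eventually.of_forall fun s => (traceNorm_sum_le s A).trans (ENNReal.sum_le_tsum s)

theorem exists_tendsto_traceNorm_sub_sum_range [CompleteSpace E] {A : ℕ → E →L[ℂ] E}
    (hA : ∑' k, traceNorm (A k) ≠ ⊤) :
    ∃ S, traceNorm S ≤ ∑' k, traceNorm (A k) ∧
      Tendsto (fun N => traceNorm (S - ∑ k ∈ Finset.range N, A k)) atTop (nhds 0) := by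
  have hsum : Summable A := Summable.of_nnnorm <| ENNReal.tsum_coe_ne_top_iff_summable.mp <|
    ne_top_of_le_ne_top hA (ENNReal.tsum_le_tsum fun k => nnnorm_le_traceNorm (A k))
  refine ⟨∑' k, A k, traceNorm_tsum_le hsum, ?_⟩
  refine tendsto_of_tendsto_of_tendsto_of_le_of_le tendsto_const_nhds
    (ENNReal.tendsto_sum_nat_add _ hA) (fun _ => zero_le) fun N => ?_
  rw [← hsum.sum_add_tsum_nat_add N, add_sub_cancel_left]
  exact traceNorm_tsum_le ((summable_nat_add_iff N).mpr hsum)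

theorem inner_apply_apply_of_adjoint_comp_eq [CompleteSpace E] {A B C : E →L[ℂ] E}
    (h : adjoint A ∘L B = C) (x y : E) : ⟪A x, B y⟫_ℂ = ⟪x, C y⟫_ℂ := by
  rw [← adjoint_inner_right, ← comp_apply, h]

theorem sum_traceNorm_adjoint_conj_le [CompleteSpace E] {κ : Type*} [Fintype κ]
    (T : E →L[ℂ] E) (V : κ → E →L[ℂ] E) (hiso : ∀ k, adjoint (V k) ∘L V k = 1)
    (horth : ∀ j k, j ≠ k → adjoint (V j) ∘L V k = 0) :
    ∑ k, traceNorm (adjoint (V k) ∘L T ∘L V k) ≤ traceNorm T := by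
  let W k : E →ₗᵢ[ℂ] E := (V k).toLinearMap.isometryOfInner fun x y => by
    simpa using inner_apply_apply_of_adjoint_comp_eq (hiso k) x y
  have hW : OrthogonalFamily ℂ (fun _ => E) W := fun j k hjk x y => by
    simpa [W] using inner_apply_apply_of_adjoint_comp_eq (horth j k hjk) x y
  simp only [traceNorm_eq_iSup_pairing T, traceNorm_eq_iSup_pairing (_ ∘L _)]
  refine (ENNReal.sum_iSup_le_iSup_sum _ _).trans (iSup_le fun p => ?_)
  calc ∑ k, (p k).pairing (adjoint (V k) ∘L T ∘L V k)
      = ∑ q : Σ k, Fin (p k).m,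
          (‖⟪T (W q.1 ((p q.1).e q.2)), W q.1 ((p q.1).f q.2)⟫_ℂ‖₊ : ℝ≥0∞) := by
        simp [OrthonormalPair.pairing, Fintype.sum_sigma, adjoint_inner_left, W]
    _ ≤ ⨆ p : OrthonormalPair E, p.pairing T := by
        rw [← traceNorm_eq_iSup_pairing]
        exact sum_nnnorm_inner_le_traceNorm T
          (hW.orthonormal_sigma_orthonormal fun k => (p k).orthonormal_e)
          (hW.orthonormal_sigma_orthonormal fun k => (p k).orthonormal_f)

theorem tsum_traceNorm_adjoint_conj_le [CompleteSpace E] {κ : Type*} (T : E →L[ℂ] E)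
    (V : κ → E →L[ℂ] E) (hiso : ∀ k, adjoint (V k) ∘L V k = 1)
    (horth : ∀ j k, j ≠ k → adjoint (V j) ∘L V k = 0) :
    ∑' k, traceNorm (adjoint (V k) ∘L T ∘L V k) ≤ traceNorm T := by
  rw [ENNReal.tsum_eq_iSup_sum]
  refine iSup_le fun s => ?_
  rw [← Finset.sum_coe_sort s]
  exact sum_traceNorm_adjoint_conj_le T (fun k : s => V k) (fun k => hiso k)
    fun j k hjk => horth j k (Subtype.coe_injective.ne hjk)

end TraceNorm

theorem tsum_conj_isometries_traceClass_general
    (T : H →L[ℂ] H) (hT : IsTraceClass T)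
    (U : ℕ → H →L[ℂ] H)
    (hiso : ∀ k, (ContinuousLinearMap.adjoint (U k)) ∘L (U k) = 1)
    (horth : ∀ j k, j ≠ k → (ContinuousLinearMap.adjoint (U j)) ∘L (U k) = 0) :
    ∃ S : H →L[ℂ] H, IsTraceClass S ∧
      Tendsto
        (fun N => traceNorm (S - ∑ k ∈ Finset.range N,
          (ContinuousLinearMap.adjoint (U k)) ∘L T ∘L (U k)))
        atTop (nhds 0) := by
  have hsum := tsum_traceNorm_adjoint_conj_le T U hiso horth
  obtain ⟨S, hS, hlim⟩ :=
    exists_tendsto_traceNorm_sub_sum_range (ne_top_of_le_ne_top hT.ne hsum)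
  exact ⟨S, hS.trans_lt (hsum.trans_lt hT), hlim⟩

/-- If `T` is trace class and `(U k)` is a sequence of isometries with mutually orthogonal
ranges, then `∑ k, (U k)* T (U k)` converges in trace norm to a trace-class operator. -/
theorem tsum_conj_isometries_traceClass
    [TopologicalSpace.SeparableSpace H]
    (T : H →L[ℂ] H) (hT : IsTraceClass T)
    (U : ℕ → H →L[ℂ] H)
    (hiso : ∀ k, (ContinuousLinearMap.adjoint (U k)) ∘L (U k) = 1)
    (horth : ∀ j k, j ≠ k → (ContinuousLinearMap.adjoint (U j)) ∘L (U k) = 0) :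
    ∃ S : H →L[ℂ] H, IsTraceClass S ∧
      Tendsto
        (fun N => traceNorm (S - ∑ k ∈ Finset.range N,
          (ContinuousLinearMap.adjoint (U k)) ∘L T ∘L (U k)))
        atTop (nhds 0) :=
  tsum_conj_isometries_traceClass_general T hT U hiso horth
end
end

section
/- Let T be a contraction on a Hilbert space H (‖T‖ ≤ 1). Define τ : ℤ → B(H) by τ(k) = T^k for k ≥ 0 and τ(k) = (T*)^{-k} for k < 0. Then τ is positive definite: for any finite families of vectors ξ_1,…,ξ_m in H and integers k_1,…,k_m, the matrix (⟨τ(k_i − k_j)ξ_j, ξ_i⟩)_{i,j} is positive semidefinite, i.e., ∑_{i,j} ⟨τ(k_i − k_j)ξ_j, ξ_i⟩ ≥ 0. -/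
/-! Let `D = 1 - T†T`, which is a positive operator because `‖T‖ ≤ 1`. Telescoping
`⟪T^c x, T^d y⟫ - ⟪T^(c+1) x, T^(d+1) y⟫ = ⟪D T^c x, T^d y⟫` gives, for `a b : ℕ`,
`⟪τ(a - b) x, y⟫ = ⟪T^a x, T^b y⟫ + ∑_{s < min a b} ⟪D T^(a-s-1) x, T^(b-s-1) y⟫`.
Writing `k i = M - n i` with `n i : ℕ` and summing over `i, j`, the quadratic form becomes
`‖∑ i, T^(n i) ξ i‖² + ∑_s ⟪D y_s, y_s⟫` with
`y_s = ∑_{n i > s} T^(n i - s - 1) ξ i`, a sum of nonnegative terms. -/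

noncomputable section

open ContinuousLinearMap
open scoped ComplexOrder

variable {H : Type*} [NormedAddCommGroup H] [InnerProductSpace ℂ H] [CompleteSpace H]

/-- `τ(k) = T^k` for `k ≥ 0`, `τ(k) = (T*)^(-k)` for `k < 0`. -/
noncomputable def tauPow (T : H →L[ℂ] H) : ℤ → (H →L[ℂ] H) := fun d =>
  if 0 ≤ d then T ^ d.toNat else (ContinuousLinearMap.adjoint T) ^ (-d).toNat

open Finset

theorem sum_sum_inner {𝕜 E ι : Type*} [RCLike 𝕜] [NormedAddCommGroup E]
    [InnerProductSpace 𝕜 E] [Fintype ι] (x y : ι → E) :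
    ∑ i, ∑ j, inner 𝕜 (x j) (y i) = inner 𝕜 (∑ j, x j) (∑ i, y i) := by
  rw [sum_inner, sum_comm]
  simp_rw [inner_sum]

theorem Int.exists_sub_eq_natCast_sub {ι : Type*} [Finite ι] (k : ι → ℤ) :
    ∃ n : ι → ℕ, ∀ i j, k i - k j = (n j : ℤ) - n i := by
  obtain ⟨M, hM⟩ := Finite.exists_le k
  refine ⟨fun i => (M - k i).toNat, fun i j => ?_⟩
  rw [Int.toNat_of_nonneg (sub_nonneg.2 (hM i)), Int.toNat_of_nonneg (sub_nonneg.2 (hM j))]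
  ring

section Defect

variable {𝕜 E : Type*} [RCLike 𝕜] [NormedAddCommGroup E] [InnerProductSpace 𝕜 E]
  [CompleteSpace E]

def defect (T : E →L[𝕜] E) : E →L[𝕜] E := 1 - adjoint T * T

theorem inner_defect_apply (T : E →L[𝕜] E) (x y : E) :
    inner 𝕜 (defect T x) y = inner 𝕜 x y - inner 𝕜 (T x) (T y) := by
  rw [defect, sub_apply, one_apply_eq_self, mul_apply_eq_comp, inner_sub_left, adjoint_inner_left]

theorem inner_defect_self_nonneg {T : E →L[𝕜] E} (hT : ‖T‖ ≤ 1) (x : E) :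
    0 ≤ inner 𝕜 (defect T x) x := by
  have hTx : ‖T x‖ ≤ ‖x‖ := by simpa using T.le_of_opNorm_le hT x
  rw [inner_defect_apply, inner_self_eq_norm_sq_to_K, inner_self_eq_norm_sq_to_K,
    ← RCLike.ofReal_pow, ← RCLike.ofReal_pow, ← RCLike.ofReal_sub, RCLike.ofReal_nonneg,
    sub_nonneg]
  gcongr

theorem inner_pow_sub_eq_add_sum_defect (T : E →L[𝕜] E) (x y : E) {a b n : ℕ} (ha : n ≤ a)
    (hb : n ≤ b) :
    inner 𝕜 ((T ^ (a - n)) x) ((T ^ (b - n)) y) = inner 𝕜 ((T ^ a) x) ((T ^ b) y) +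
      ∑ s ∈ range n, inner 𝕜 (defect T ((T ^ (a - (s + 1))) x)) ((T ^ (b - (s + 1))) y) := by
  induction n with
  | zero => simp
  | succ n ih =>
    have hpow (c : ℕ) (hc : n + 1 ≤ c) (z : E) :
        (T ^ (c - n)) z = T ((T ^ (c - (n + 1))) z) := by
      rw [← mul_apply_eq_comp, ← pow_succ']
      congr 2
      omega
    rw [sum_range_succ, ← add_assoc, ← ih (by omega) (by omega), inner_defect_apply, hpow a ha,
      hpow b hb, add_sub_cancel]

def truncPow (T : E →L[𝕜] E) (n : ℕ) (x : E) (s : ℕ) : E :=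
  if s < n then (T ^ (n - (s + 1))) x else 0

theorem sum_range_inner_defect_truncPow (T : E →L[𝕜] E) (x y : E) {a b N : ℕ}
    (hN : min a b ≤ N) :
    ∑ s ∈ range N, inner 𝕜 (defect T (truncPow T a x s)) (truncPow T b y s) =
      ∑ s ∈ range (min a b),
        inner 𝕜 (defect T ((T ^ (a - (s + 1))) x)) ((T ^ (b - (s + 1))) y) := by
  symm
  refine sum_subset_zero_on_sdiff (range_subset_range.2 hN) (fun s hs => ?_) (fun s hs => ?_)
  · simp only [mem_sdiff, mem_range, lt_min_iff, not_and_or, not_lt] at hs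
    rcases hs.2 with ha | hb
    · simp [truncPow, ha.not_gt]
    · simp [truncPow, hb.not_gt]
  · simp only [mem_range, lt_min_iff] at hs
    simp [truncPow, hs.1, hs.2]

end Defect

theorem inner_tauPow_natCast_sub (T : H →L[ℂ] H) (a b : ℕ) (x y : H) :
    inner ℂ (tauPow T (a - b) x) y =
      inner ℂ ((T ^ (a - min a b)) x) ((T ^ (b - min a b)) y) := by
  rcases le_or_gt b a with hba | hab
  · have hτ : tauPow T (a - b) = T ^ (a - b) := by
      rw [tauPow, if_pos (by omega), ← Int.natCast_sub hba, Int.toNat_natCast]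
    simp [hτ, min_eq_right hba]
  · have hτ : tauPow T (a - b) = adjoint (T ^ (b - a)) := by
      rw [tauPow, if_neg (by omega), neg_sub, ← Int.natCast_sub hab.le, Int.toNat_natCast,
        ← star_eq_adjoint, ← star_eq_adjoint, star_pow]
    simp [hτ, min_eq_left hab.le, adjoint_inner_left]

theorem inner_tauPow_natCast_sub_eq_add_sum_defect (T : H →L[ℂ] H) (x y : H) {a b N : ℕ}
    (hN : min a b ≤ N) :
    inner ℂ (tauPow T (a - b) x) y = inner ℂ ((T ^ a) x) ((T ^ b) y) +
      ∑ s ∈ range N, inner ℂ (defect T (truncPow T a x s)) (truncPow T b y s) := by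
  rw [inner_tauPow_natCast_sub, sum_range_inner_defect_truncPow T x y hN,
    inner_pow_sub_eq_add_sum_defect T x y (min_le_left a b) (min_le_right a b)]

/-- If `T` is a contraction then `τ` is a positive definite operator-valued function:
all the finite quadratic forms `∑ i j, ⟪τ(k i - k j) (ξ j), ξ i⟫` are real and
nonnegative (nonnegativity in the partial order of `ℂ`). -/
theorem contraction_tauPow_posDef
    (T : H →L[ℂ] H) (hT : ‖T‖ ≤ 1)
    (m : ℕ) (ξ : Fin m → H) (k : Fin m → ℤ) :
    0 ≤ ∑ i, ∑ j, (inner ℂ ((tauPow T (k i - k j)) (ξ j)) (ξ i) : ℂ) := by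
  obtain ⟨n, hn⟩ := Int.exists_sub_eq_natCast_sub k
  obtain ⟨N, hN⟩ := Finite.exists_le n
  have hpair (i j : Fin m) :
      inner ℂ (tauPow T (k i - k j) (ξ j)) (ξ i) =
        inner ℂ ((T ^ n j) (ξ j)) ((T ^ n i) (ξ i)) + ∑ s ∈ range N,
          inner ℂ (defect T (truncPow T (n j) (ξ j) s)) (truncPow T (n i) (ξ i) s) := by
    rw [hn, inner_tauPow_natCast_sub_eq_add_sum_defect T _ _
      ((min_le_left _ _).trans (hN j))]
  have hsum : ∑ i, ∑ j, inner ℂ (tauPow T (k i - k j) (ξ j)) (ξ i) =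
      inner ℂ (∑ j, (T ^ n j) (ξ j)) (∑ j, (T ^ n j) (ξ j)) + ∑ s ∈ range N,
        inner ℂ (defect T (∑ j, truncPow T (n j) (ξ j) s))
          (∑ j, truncPow T (n j) (ξ j) s) := by
    simp only [hpair, sum_add_distrib, sum_sum_inner, map_sum]
    congr 1
    simp only [← sum_sum_inner]
    exact (sum_congr rfl fun _ _ => sum_comm).trans sum_comm
  rw [hsum]
  refine add_nonneg ?_ (sum_nonneg fun s _ => inner_defect_self_nonneg hT _)
  rw [inner_self_eq_norm_sq_to_K]
  positivity
end
end

section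
/- Let (e_k) be a sequence of unit vectors in a Hilbert space E, and let p, q be positive integers. If ∑_{k=1}^∞ |1 − ⟨e_k, e_{k+p}⟩| < ∞ and ∑_{k=1}^∞ |1 − ⟨e_k, e_{k+q}⟩| < ∞, then ∑_{k=1}^∞ |1 − ⟨e_k, e_{k+p+q}⟩| < ∞. -/
section UnitVectors

variable {𝕜 E : Type*} [RCLike 𝕜] [NormedAddCommGroup E] [InnerProductSpace 𝕜 E]

local notation "⟪" x ", " y "⟫" => inner 𝕜 x y

theorem norm_sub_sq_le_two_mul_norm_one_sub_inner {a b : E} (ha : ‖a‖ = 1) (hb : ‖b‖ = 1) :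
    ‖a - b‖ ^ 2 ≤ 2 * ‖1 - ⟪a, b⟫‖ := by
  have hre : RCLike.re (1 - ⟪a, b⟫) ≤ ‖1 - ⟪a, b⟫‖ := RCLike.re_le_norm _
  rw [map_sub, RCLike.one_re] at hre
  rw [@norm_sub_sq 𝕜, ha, hb]
  linarith

/-- The bound is linear in the defects, not merely in their square roots as `‖a - c‖` would give,
because the cross term `⟪a - b, c - b⟫` is quadratic in the distances `‖a - b‖`, `‖b - c‖`. -/
theorem norm_one_sub_inner_le {a b c : E} (ha : ‖a‖ = 1) (hb : ‖b‖ = 1) (hc : ‖c‖ = 1) :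
    ‖1 - ⟪a, c⟫‖ ≤ 2 * (‖1 - ⟪a, b⟫‖ + ‖1 - ⟪b, c⟫‖) := by
  have hbb : ⟪b, b⟫ = 1 := by rw [inner_self_eq_norm_sq_to_K, hb]; norm_num
  have hsplit : 1 - ⟪a, c⟫ = (1 - ⟪a, b⟫) + (1 - ⟪b, c⟫) - ⟪a - b, c - b⟫ := by
    simp only [inner_sub_left, inner_sub_right, hbb]
    ring
  have hab := norm_sub_sq_le_two_mul_norm_one_sub_inner (𝕜 := 𝕜) ha hb
  have hbc := norm_sub_sq_le_two_mul_norm_one_sub_inner (𝕜 := 𝕜) hb hc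
  have hcross : ‖⟪a - b, c - b⟫‖ ≤ ‖1 - ⟪a, b⟫‖ + ‖1 - ⟪b, c⟫‖ := by
    calc ‖⟪a - b, c - b⟫‖ ≤ ‖a - b‖ * ‖b - c‖ := by
          rw [norm_sub_rev b c]; exact norm_inner_le_norm _ _
      _ ≤ (‖a - b‖ ^ 2 + ‖b - c‖ ^ 2) / 2 := by nlinarith [sq_nonneg (‖a - b‖ - ‖b - c‖)]
      _ ≤ ‖1 - ⟪a, b⟫‖ + ‖1 - ⟪b, c⟫‖ := by linarith
  calc ‖1 - ⟪a, c⟫‖ ≤ ‖1 - ⟪a, b⟫‖ + ‖1 - ⟪b, c⟫‖ + ‖⟪a - b, c - b⟫‖ := by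
        rw [hsplit]; exact (norm_sub_le _ _).trans (by gcongr; exact norm_add_le _ _)
    _ ≤ 2 * (‖1 - ⟪a, b⟫‖ + ‖1 - ⟪b, c⟫‖) := by linarith

end UnitVectors

theorem period_add_general {E : Type*} [NormedAddCommGroup E] [InnerProductSpace ℂ E]
    (e : ℕ → E) (he : ∀ k, ‖e k‖ = 1) (p q : ℕ)
    (h1 : Summable fun k => ‖1 - (inner ℂ (e k) (e (k + p)) : ℂ)‖)
    (h2 : Summable fun k => ‖1 - (inner ℂ (e k) (e (k + q)) : ℂ)‖) :
    Summable fun k => ‖1 - (inner ℂ (e k) (e (k + (p + q))) : ℂ)‖ := by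
  have h2' : Summable fun k => ‖1 - (inner ℂ (e (k + p)) (e (k + p + q)) : ℂ)‖ :=
    (summable_nat_add_iff p).2 h2
  refine .of_nonneg_of_le (fun _ => norm_nonneg _) (fun k => ?_) ((h1.add h2').mul_left 2)
  rw [← add_assoc]
  exact norm_one_sub_inner_le (he k) (he (k + p)) (he (k + p + q))

/-- If `(e k)` is a sequence of unit vectors and both `p` and `q` are "periods", i.e.
`∑ |1 - ⟪e k, e (k+p)⟫|` and `∑ |1 - ⟪e k, e (k+q)⟫|` converge, then `p + q` is a
period as well. -/
theorem period_add {E : Type*} [NormedAddCommGroup E] [InnerProductSpace ℂ E]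
    (e : ℕ → E) (he : ∀ k, ‖e k‖ = 1) (p q : ℕ) (hp : 0 < p) (hq : 0 < q)
    (h1 : Summable fun k => ‖1 - (inner ℂ (e k) (e (k + p)) : ℂ)‖)
    (h2 : Summable fun k => ‖1 - (inner ℂ (e k) (e (k + q)) : ℂ)‖) :
    Summable fun k => ‖1 - (inner ℂ (e k) (e (k + (p + q))) : ℂ)‖ :=
  period_add_general e he p q h1 h2
end

section
/- Let E be an n-dimensional Hilbert space (n finite) with orthonormal basis v_1,…,v_n, F full Fock space over E, and β(A) = ∑_{i=1}^n r(v_i) A r(v_i)* where r(v_i) are right creation operators. Let B be a bounded operator on F with P_m B P_m = B, where P_m is the projection onto ⊕_{j=0}^m E^{⊗j}. Then for all i, j ≥ 0 with |i − j| ≥ m+1, β^i(A) β^j(B) = 0 for all A with P_m A P_m = A. -/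
noncomputable section

open ContinuousLinearMap

open scoped InnerProductSpace

/-- Let `β(A) = ∑ i, r(v i) A r(v i)*` on bounded operators on full Fock space over an
`n`-dimensional Hilbert space (realized as `ℓ²` of words over `Fin n`), and let `P m`
be the projection onto words of length at most `m`.  If `A` and `B` are supported on
`⊕_{j ≤ m} E^{⊗j}`, then `β^i(A) β^j(B) = 0` whenever `|i - j| ≥ m + 1`. -/
theorem beta_iterates_disjoint
    {n : ℕ}
    (R : Fin n → (lp (fun _ : List (Fin n) => ℂ) 2 →L[ℂ] lp (fun _ : List (Fin n) => ℂ) 2))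
    (hR_nil : ∀ i f, R i f ([] : List (Fin n)) = 0)
    (hR_concat : ∀ i f (t : List (Fin n)) (j : Fin n),
      R i f (t ++ [j]) = if j = i then f t else 0)
    (P : ℕ → (lp (fun _ : List (Fin n) => ℂ) 2 →L[ℂ] lp (fun _ : List (Fin n) => ℂ) 2))
    (hP : ∀ m f (w : List (Fin n)), P m f w = if w.length ≤ m then f w else 0)
    (m : ℕ)
    (A B : lp (fun _ : List (Fin n) => ℂ) 2 →L[ℂ] lp (fun _ : List (Fin n) => ℂ) 2)
    (hA : (P m) ∘L A ∘L (P m) = A) (hB : (P m) ∘L B ∘L (P m) = B) :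
    ∀ i j : ℕ, (m : ℤ) + 1 ≤ |(i : ℤ) - (j : ℤ)| →
      ((fun C => ∑ l, (R l) ∘L C ∘L (ContinuousLinearMap.adjoint (R l)))^[i] A) ∘L
        ((fun C => ∑ l, (R l) ∘L C ∘L (ContinuousLinearMap.adjoint (R l)))^[j] B) = 0 := by
  set β : (lp (fun _ : List (Fin n) => ℂ) 2 →L[ℂ] lp (fun _ : List (Fin n) => ℂ) 2) →
      (lp (fun _ : List (Fin n) => ℂ) 2 →L[ℂ] lp (fun _ : List (Fin n) => ℂ) 2) :=
    fun C => ∑ l, (R l) ∘L C ∘L (ContinuousLinearMap.adjoint (R l)) with hβ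
  -- concatenation injectivity
  have hcat : ∀ (s t : List (Fin n)) (b l : Fin n), s ++ [b] = t ++ [l] ↔ s = t ∧ b = l := by
    intro s t b l
    simp only [← List.concat_eq_append, List.concat_inj]
  -- the adjoint of a right creation operator removes the last letter
  have hadj : ∀ (l : Fin n) (f : lp (fun _ : List (Fin n) => ℂ) 2) (t : List (Fin n)),
      (ContinuousLinearMap.adjoint (R l)) f t = f (t ++ [l]) := by
    intro l f t
    have h1 : R l (lp.single 2 t (1 : ℂ)) = lp.single 2 (t ++ [l]) (1 : ℂ) := by
      apply lp.ext; funext w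
      rcases List.eq_nil_or_concat w with rfl | ⟨s, b, rfl⟩
      · rw [hR_nil, lp.single_apply_ne (E := fun _ : List (Fin n) => ℂ) 2 (t ++ [l]) 1 (by simp)]
      · rw [List.concat_eq_append, hR_concat]
        by_cases hb : b = l
        · by_cases hs : s = t
          · subst hb; subst hs
            rw [if_pos rfl, lp.single_apply_self (E := fun _ : List (Fin n) => ℂ),
              lp.single_apply_self (E := fun _ : List (Fin n) => ℂ)]
          · rw [if_pos hb, lp.single_apply_ne (E := fun _ : List (Fin n) => ℂ) 2 t 1 hs,
              lp.single_apply_ne (E := fun _ : List (Fin n) => ℂ) 2 (t ++ [l]) 1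
                (by simp [hcat, hs, hb])]
        · rw [if_neg hb, lp.single_apply_ne (E := fun _ : List (Fin n) => ℂ) 2 (t ++ [l]) 1
            (by simp [hcat, hb])]
    have h2 : ⟪lp.single 2 t (1:ℂ), (ContinuousLinearMap.adjoint (R l)) f⟫_ℂ
        = (ContinuousLinearMap.adjoint (R l)) f t := by
      rw [lp.inner_single_left]
      simp [RCLike.inner_apply]
    have h3 : ⟪lp.single 2 (t ++ [l]) (1:ℂ), f⟫_ℂ = f (t ++ [l]) := by
      rw [lp.inner_single_left]
      simp [RCLike.inner_apply]
    rw [← h2, ContinuousLinearMap.adjoint_inner_right, h1, h3]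
  -- composition of projections
  have hPP : ∀ a b, a ≤ b → ∀ f, P a (P b f) = P a f := by
    intro a b hab f
    apply lp.ext; funext w
    simp only [hP]
    split_ifs <;> first | rfl | omega
  have hPP' : ∀ a b, a ≤ b → ∀ f, P b (P a f) = P a f := by
    intro a b hab f
    apply lp.ext; funext w
    simp only [hP]
    split_ifs <;> first | rfl | omega
  -- commutation identities
  have hI1 : ∀ (l : Fin n) a f, P (a + 1) (R l f) = R l (P a f) := by
    intro l a f
    apply lp.ext; funext w
    rcases List.eq_nil_or_concat w with rfl | ⟨s, b, rfl⟩
    · simp only [hP, hR_nil]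
      simp
    · rw [List.concat_eq_append]
      simp only [hP, hR_concat]
      simp only [List.length_append, List.length_cons, List.length_nil, zero_add]
      split_ifs <;> first | rfl | omega
  have hI2 : ∀ (l : Fin n) a f,
      (ContinuousLinearMap.adjoint (R l)) (P (a + 1) f) = P a ((ContinuousLinearMap.adjoint (R l)) f) := by
    intro l a f
    apply lp.ext; funext t
    simp only [hadj, hP]
    simp only [List.length_append, List.length_cons, List.length_nil, zero_add]
    split_ifs <;> first | rfl | omega
  have hP0R : ∀ (l : Fin n) f, P 0 (R l f) = 0 := by
    intro l f
    apply lp.ext; funext w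
    rw [hP]
    rcases List.eq_nil_or_concat w with rfl | ⟨s, b, rfl⟩
    · rw [hR_nil]; simp
    · simp [List.concat_eq_append]
  have hRP0 : ∀ (l : Fin n) f, (ContinuousLinearMap.adjoint (R l)) (P 0 f) = 0 := by
    intro l f
    apply lp.ext; funext t
    rw [hadj, hP]
    simp
  -- upper support bound for iterates
  have upper : ∀ (C : lp (fun _ : List (Fin n) => ℂ) 2 →L[ℂ] lp (fun _ : List (Fin n) => ℂ) 2),
      (P m) ∘L C ∘L (P m) = C → ∀ k f, β^[k] C f = P (m + k) (β^[k] C (P (m + k) f)) := by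
    intro C hC k
    induction k with
    | zero =>
      intro f
      conv_lhs => rw [← hC]
      simp [comp_apply]
    | succ k ih =>
      intro f
      rw [Function.iterate_succ_apply']
      have hDapp : ∀ g, P (m + k) (β^[k] C (P (m + k) g)) = β^[k] C g := fun g => (ih g).symm
      have hsum : ∀ g, β (β^[k] C) g = ∑ l, R l (β^[k] C ((ContinuousLinearMap.adjoint (R l)) g)) := by
        intro g
        rw [hβ]
        simp [ContinuousLinearMap.sum_apply, comp_apply]
      rw [hsum, hsum, map_sum]
      apply Finset.sum_congr rfl
      intro l _
      have e1 : (m + (k + 1)) = (m + k) + 1 := by omega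
      rw [e1, hI2, hI1, hDapp]
  -- lower support bound for iterates
  have lower : ∀ (C : lp (fun _ : List (Fin n) => ℂ) 2 →L[ℂ] lp (fun _ : List (Fin n) => ℂ) 2) k,
      (∀ f, P k (β^[k + 1] C f) = 0) ∧ (∀ f, β^[k + 1] C (P k f) = 0) := by
    intro C k
    induction k with
    | zero =>
      constructor
      · intro f
        rw [Function.iterate_succ_apply', Function.iterate_zero_apply]
        have hsum : β C f = ∑ l, R l (C ((ContinuousLinearMap.adjoint (R l)) f)) := by
          rw [hβ]; simp [ContinuousLinearMap.sum_apply, comp_apply]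
        rw [hsum, map_sum]
        refine Finset.sum_eq_zero fun l _ => ?_
        exact hP0R l _
      · intro f
        rw [Function.iterate_succ_apply', Function.iterate_zero_apply]
        have hsum : β C (P 0 f) = ∑ l, R l (C ((ContinuousLinearMap.adjoint (R l)) (P 0 f))) := by
          rw [hβ]; simp [ContinuousLinearMap.sum_apply, comp_apply]
        rw [hsum]
        refine Finset.sum_eq_zero fun l _ => ?_
        rw [hRP0]
        simp
    | succ k ih =>
      have hsum : ∀ g, β^[k + 1 + 1] C g
          = ∑ l, R l (β^[k + 1] C ((ContinuousLinearMap.adjoint (R l)) g)) := by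
        intro g
        rw [Function.iterate_succ_apply', hβ]
        simp [ContinuousLinearMap.sum_apply, comp_apply]
      constructor
      · intro f
        rw [hsum, map_sum]
        refine Finset.sum_eq_zero fun l _ => ?_
        rw [hI1, ih.1]
        simp
      · intro f
        rw [hsum]
        refine Finset.sum_eq_zero fun l _ => ?_
        rw [hI2, ih.2]
        simp
  -- conclusion
  intro i j hij
  ext f
  simp only [comp_apply, ContinuousLinearMap.zero_apply]
  rcases abs_cases ((i : ℤ) - (j : ℤ)) with ⟨he, _⟩ | ⟨he, _⟩
  · -- i ≥ j + m + 1
    have hij' : j + m + 1 ≤ i := by omega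
    obtain ⟨i', rfl⟩ : ∃ i', i = i' + 1 := ⟨i - 1, by omega⟩
    rw [upper B hB j f]
    have h1 : P (i') (P (m + j) (β^[j] B (P (m + j) f))) = P (m + j) (β^[j] B (P (m + j) f)) :=
      hPP' (m + j) i' (by omega) _
    rw [← h1, (lower A i').2]
  · -- j ≥ i + m + 1
    have hij' : i + m + 1 ≤ j := by omega
    obtain ⟨j', rfl⟩ : ∃ j', j = j' + 1 := ⟨j - 1, by omega⟩
    rw [upper A hA i (β^[j' + 1] B f)]
    have h0 : P j' (β^[j' + 1] B f) = 0 := (lower B j').1 f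
    have h1 : P (m + i) (β^[j' + 1] B f) = 0 := by
      rw [← hPP (m + i) j' (by omega), h0]
      simp
    rw [h1]
    simp
end
end

section
/- With E finite-dimensional and β as above, the map δ = id − β on B(F) is injective: if A ∈ B(F) satisfies β(A) = A, then A = 0. -/
noncomputable section

open ContinuousLinearMap

set_option maxHeartbeats 1000000 in
/-- The map `δ = id - β`, where `β(A) = ∑ i, r(v i) A r(v i)*` on bounded operators on
full Fock space over an `n`-dimensional Hilbert space (realized as `ℓ²` of words over
`Fin n`), is injective: if `β(A) = A` then `A = 0`. -/
theorem beta_fixed_point_eq_zero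
    {n : ℕ}
    (R : Fin n → (lp (fun _ : List (Fin n) => ℂ) 2 →L[ℂ] lp (fun _ : List (Fin n) => ℂ) 2))
    (hR_nil : ∀ i f, R i f ([] : List (Fin n)) = 0)
    (hR_concat : ∀ i f (t : List (Fin n)) (j : Fin n),
      R i f (t ++ [j]) = if j = i then f t else 0)
    (A : lp (fun _ : List (Fin n) => ℂ) 2 →L[ℂ] lp (fun _ : List (Fin n) => ℂ) 2)
    (hA : (∑ l, (R l) ∘L A ∘L (ContinuousLinearMap.adjoint (R l))) = A) :
    A = 0 := by
  set H := lp (fun _ : List (Fin n) => ℂ) 2 with hH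
  let e : List (Fin n) → H := fun t => lp.single 2 t (1 : ℂ)
  -- adjoint of R l on basis vectors
  have hadj_nil : ∀ l : Fin n, ContinuousLinearMap.adjoint (R l) (e []) = 0 := by
    intro l
    apply ext_inner_right ℂ
    intro f
    rw [ContinuousLinearMap.adjoint_inner_left, inner_zero_left]
    rw [lp.inner_single_left]
    simp [hR_nil]
  have hadj_concat : ∀ (l : Fin n) (t : List (Fin n)) (j : Fin n),
      ContinuousLinearMap.adjoint (R l) (e (t ++ [j])) = if j = l then e t else 0 := by
    intro l t j
    apply ext_inner_right ℂ
    intro f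
    rw [ContinuousLinearMap.adjoint_inner_left]
    rw [lp.inner_single_left]
    rw [hR_concat]
    by_cases h : j = l
    · subst h
      rw [if_pos rfl, if_pos rfl, lp.inner_single_left]
    · rw [if_neg h, if_neg h, inner_zero_left]
      simp
  -- matrix entries
  set a : List (Fin n) → List (Fin n) → ℂ :=
    fun s t => inner (𝕜 := ℂ) (e s) (A (e t)) with ha
  have key : ∀ s t, a s t = ∑ l : Fin n,
      inner (𝕜 := ℂ) (ContinuousLinearMap.adjoint (R l) (e s))
        (A (ContinuousLinearMap.adjoint (R l) (e t))) := by
    intro s t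
    conv_lhs => rw [ha]
    simp only
    conv_lhs => rw [← hA]
    rw [ContinuousLinearMap.sum_apply, inner_sum]
    congr 1
    funext l
    rw [ContinuousLinearMap.comp_apply, ContinuousLinearMap.comp_apply,
      ← ContinuousLinearMap.adjoint_inner_left]
  have h0 : ∀ t, a [] t = 0 := by
    intro t
    rw [key]
    refine Finset.sum_eq_zero fun l _ => ?_
    rw [hadj_nil, inner_zero_left]
  have hz : ∀ s, a s [] = 0 := by
    intro s
    rw [key]
    refine Finset.sum_eq_zero fun l _ => ?_
    rw [hadj_nil]
    simp
  have hstep : ∀ (s : List (Fin n)) (i : Fin n) (t : List (Fin n)) (j : Fin n),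
      a (s ++ [i]) (t ++ [j]) = if j = i then a s t else 0 := by
    intro s i t j
    rw [key]
    have : ∀ l : Fin n,
        inner (𝕜 := ℂ) (ContinuousLinearMap.adjoint (R l) (e (s ++ [i])))
          (A (ContinuousLinearMap.adjoint (R l) (e (t ++ [j]))))
        = if l = i then (if j = i then a s t else 0) else 0 := by
      intro l
      rw [hadj_concat, hadj_concat]
      by_cases hl : l = i
      · subst hl
        simp only [if_pos rfl]
        by_cases hj : j = l
        · simp [hj, ha]
        · simp [hj]
      · have h2 : ¬ i = l := fun h => hl h.symm
        simp [h2, hl]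
    rw [Finset.sum_congr rfl (fun l _ => this l)]
    simp
  have main : ∀ s t, a s t = 0 := by
    intro s
    induction s using List.reverseRecOn with
    | nil => exact h0
    | append_singleton s i ih =>
      intro t
      rcases t.eq_nil_or_concat' with rfl | ⟨t', j, rfl⟩
      · exact hz _
      · rw [hstep]
        by_cases hj : j = i
        · simp [hj, ih]
        · simp [hj]
  have hAe : ∀ t, A (e t) = 0 := by
    intro t
    apply lp.ext
    funext s
    have h := main s t
    rw [ha] at h
    simp only at h
    rw [lp.inner_single_left] at h
    simpa using h
  apply ContinuousLinearMap.ext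
  intro f
  rw [ContinuousLinearMap.zero_apply]
  have hsum : HasSum (fun t : List (Fin n) => lp.single 2 t (f t : ℂ)) f :=
    lp.hasSum_single (by norm_num) f
  have hsum2 : HasSum (fun t : List (Fin n) => A (lp.single 2 t (f t : ℂ))) (A f) :=
    hsum.mapL A
  have hzero : ∀ t : List (Fin n), A (lp.single 2 t (f t : ℂ)) = 0 := by
    intro t
    have : lp.single 2 t (f t : ℂ) = (f t : ℂ) • e t := by
      rw [← lp.single_smul]
      norm_num
    rw [this, map_smul, hAe, smul_zero]
  rw [funext hzero] at hsum2
  exact hsum2.unique hasSum_zero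
end
end

section
/- Let E be finite-dimensional, F full Fock space over E, l the left creation representation, and δ = id − β with β(A) = ∑_i r(v_i) A r(v_i)*. Then for all multi-indices μ = (i_1,…,i_k) and ν = (j_1,…,j_l), δ(l(v_{i_1})⋯l(v_{i_k}) l(v_{j_l})*⋯l(v_{j_1})*) equals the rank-one operator ξ ↦ ⟨ξ, v_{j_1}⊗⋯⊗v_{j_l}⟩ (v_{i_1}⊗⋯⊗v_{i_k}). In particular δ maps the *-algebra generated by the left creation operators into the compact operators on F. -/
noncomputable section

open ContinuousLinearMap

namespace DeltaAuxFock

variable {n : ℕ}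

local notation "𝔽" => lp (fun _ : List (Fin n) => ℂ) 2

lemma single_inner (f : 𝔽) (w : List (Fin n)) :
    inner (𝕜 := ℂ) (lp.single 2 w (1:ℂ)) f = f w := by
  rw [lp.inner_single_left]; simp [RCLike.inner_apply]

lemma concat_inj {t w : List (Fin n)} {j l : Fin n} :
    t ++ [j] = w ++ [l] ↔ t = w ∧ j = l := by
  constructor
  · intro h
    obtain ⟨h1, h2⟩ := List.append_inj' h rfl
    exact ⟨h1, by simpa using h2⟩
  · rintro ⟨rfl, rfl⟩; rfl

section L

lemma L_single (L : Fin n → (𝔽 →L[ℂ] 𝔽))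
    (hL_nil : ∀ (i : Fin n) (f : 𝔽), L i f ([] : List (Fin n)) = 0)
    (hL_cons : ∀ (i : Fin n) (f : 𝔽) (j : Fin n) (t : List (Fin n)),
      L i f (j :: t) = if j = i then f t else 0)
    (i : Fin n) (t : List (Fin n)) :
    L i (lp.single 2 t (1:ℂ)) = lp.single 2 (i :: t) (1:ℂ) := by
  apply lp.ext; funext u
  cases u with
  | nil =>
    rw [hL_nil]
    exact (lp.single_apply_ne (E := fun _ : List (Fin n) => ℂ) 2 (i :: t) (1:ℂ)
      (show ([] : List (Fin n)) ≠ i :: t by simp)).symm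
  | cons j u =>
    rw [hL_cons]
    by_cases hji : j = i
    · subst hji
      rw [if_pos rfl]
      by_cases hut : u = t
      · subst hut; rw [lp.single_apply_self, lp.single_apply_self]
      · rw [lp.single_apply_ne _ _ _ hut, lp.single_apply_ne _ _ _ (by simp [hut])]
    · rw [if_neg hji, lp.single_apply_ne _ _ _ (by simp [hji])]

lemma P_single (L : Fin n → (𝔽 →L[ℂ] 𝔽))
    (hL_nil : ∀ (i : Fin n) (f : 𝔽), L i f ([] : List (Fin n)) = 0)
    (hL_cons : ∀ (i : Fin n) (f : 𝔽) (j : Fin n) (t : List (Fin n)),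
      L i f (j :: t) = if j = i then f t else 0)
    (μ t : List (Fin n)) :
    ((μ.map L).prod) (lp.single 2 t (1:ℂ)) = lp.single 2 (μ ++ t) (1:ℂ) := by
  induction μ generalizing t with
  | nil => simp [ContinuousLinearMap.one_apply]
  | cons i μ ih =>
    rw [List.map_cons, List.prod_cons, ContinuousLinearMap.mul_apply, ih,
      L_single L hL_nil hL_cons]
    rfl

lemma adjP_apply (L : Fin n → (𝔽 →L[ℂ] 𝔽))
    (hL_nil : ∀ (i : Fin n) (f : 𝔽), L i f ([] : List (Fin n)) = 0)
    (hL_cons : ∀ (i : Fin n) (f : 𝔽) (j : Fin n) (t : List (Fin n)),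
      L i f (j :: t) = if j = i then f t else 0)
    (ν : List (Fin n)) (f : 𝔽) (w : List (Fin n)) :
    (ContinuousLinearMap.adjoint ((ν.map L).prod)) f w = f (ν ++ w) := by
  calc (ContinuousLinearMap.adjoint ((ν.map L).prod)) f w
      = inner (𝕜 := ℂ) (lp.single 2 w (1:ℂ))
          ((ContinuousLinearMap.adjoint ((ν.map L).prod)) f) := (single_inner _ _).symm
    _ = inner (𝕜 := ℂ) (((ν.map L).prod) (lp.single 2 w (1:ℂ))) f :=
        ContinuousLinearMap.adjoint_inner_right _ _ _
    _ = inner (𝕜 := ℂ) (lp.single 2 (ν ++ w) (1:ℂ)) f := by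
        rw [P_single L hL_nil hL_cons]
    _ = f (ν ++ w) := single_inner _ _

lemma P_apply (L : Fin n → (𝔽 →L[ℂ] 𝔽))
    (hL_nil : ∀ (i : Fin n) (f : 𝔽), L i f ([] : List (Fin n)) = 0)
    (hL_cons : ∀ (i : Fin n) (f : 𝔽) (j : Fin n) (t : List (Fin n)),
      L i f (j :: t) = if j = i then f t else 0)
    (μ : List (Fin n)) (g : 𝔽) (w : List (Fin n)) :
    ((μ.map L).prod g) w = if μ <+: w then g (w.drop μ.length) else 0 := by
  induction μ generalizing g w with
  | nil => simp [ContinuousLinearMap.one_apply]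
  | cons i μ ih =>
    rw [List.map_cons, List.prod_cons, ContinuousLinearMap.mul_apply]
    cases w with
    | nil =>
      rw [hL_nil, if_neg (by simp)]
    | cons j w =>
      rw [hL_cons]
      have h1 : (i :: μ) <+: (j :: w) ↔ i = j ∧ μ <+: w := List.cons_prefix_cons
      by_cases hji : j = i
      · subst hji
        rw [if_pos rfl, ih]
        by_cases h : μ <+: w
        · rw [if_pos h, if_pos (h1.mpr ⟨rfl, h⟩)]
          rfl
        · rw [if_neg h, if_neg (fun hh => h (h1.mp hh).2)]
      · rw [if_neg hji, if_neg (fun hh => hji ((h1.mp hh).1.symm))]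

end L

section R

lemma R_single (R : Fin n → (𝔽 →L[ℂ] 𝔽))
    (hR_nil : ∀ (i : Fin n) (f : 𝔽), R i f ([] : List (Fin n)) = 0)
    (hR_concat : ∀ (i : Fin n) (f : 𝔽) (t : List (Fin n)) (j : Fin n),
      R i f (t ++ [j]) = if j = i then f t else 0)
    (l : Fin n) (w : List (Fin n)) :
    R l (lp.single 2 w (1:ℂ)) = lp.single 2 (w ++ [l]) (1:ℂ) := by
  apply lp.ext; funext u
  rcases List.eq_nil_or_concat u with rfl | ⟨t, j, rfl⟩
  · rw [hR_nil]
    exact (lp.single_apply_ne (E := fun _ : List (Fin n) => ℂ) 2 (w ++ [l]) (1:ℂ)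
      (show ([] : List (Fin n)) ≠ w ++ [l] by simp)).symm
  · rw [List.concat_eq_append, hR_concat]
    by_cases hjl : j = l
    · subst hjl
      rw [if_pos rfl]
      by_cases htw : t = w
      · subst htw; rw [lp.single_apply_self, lp.single_apply_self]
      · rw [lp.single_apply_ne _ _ _ htw,
          lp.single_apply_ne _ _ _ (by simp [concat_inj, htw])]
    · rw [if_neg hjl, lp.single_apply_ne _ _ _ (by simp [concat_inj, hjl])]

lemma adjR_apply (R : Fin n → (𝔽 →L[ℂ] 𝔽))
    (hR_nil : ∀ (i : Fin n) (f : 𝔽), R i f ([] : List (Fin n)) = 0)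
    (hR_concat : ∀ (i : Fin n) (f : 𝔽) (t : List (Fin n)) (j : Fin n),
      R i f (t ++ [j]) = if j = i then f t else 0)
    (l : Fin n) (f : 𝔽) (w : List (Fin n)) :
    (ContinuousLinearMap.adjoint (R l)) f w = f (w ++ [l]) := by
  calc (ContinuousLinearMap.adjoint (R l)) f w
      = inner (𝕜 := ℂ) (lp.single 2 w (1:ℂ))
          ((ContinuousLinearMap.adjoint (R l)) f) := (single_inner _ _).symm
    _ = inner (𝕜 := ℂ) ((R l) (lp.single 2 w (1:ℂ))) f :=
        ContinuousLinearMap.adjoint_inner_right _ _ _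
    _ = inner (𝕜 := ℂ) (lp.single 2 (w ++ [l]) (1:ℂ)) f := by
        rw [R_single R hR_nil hR_concat]
    _ = f (w ++ [l]) := single_inner _ _

lemma adjR_mul_R (R : Fin n → (𝔽 →L[ℂ] 𝔽))
    (hR_nil : ∀ (i : Fin n) (f : 𝔽), R i f ([] : List (Fin n)) = 0)
    (hR_concat : ∀ (i : Fin n) (f : 𝔽) (t : List (Fin n)) (j : Fin n),
      R i f (t ++ [j]) = if j = i then f t else 0)
    (l m : Fin n) :
    ContinuousLinearMap.adjoint (R l) * R m = if l = m then 1 else 0 := by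
  ext f w
  rw [ContinuousLinearMap.mul_apply, adjR_apply R hR_nil hR_concat, hR_concat]
  by_cases h : l = m
  · subst h; simp [ContinuousLinearMap.one_apply]
  · simp [h, Ne.symm h]

end R

lemma rankOne_compact (ν μ : List (Fin n)) :
    IsCompactOperator (fun f : 𝔽 => f ν • (lp.single 2 μ (1:ℂ) : 𝔽)) := by
  refine ⟨((fun c : ℂ => c • (lp.single 2 μ (1:ℂ) : 𝔽)) '' Metric.closedBall 0 1 : Set 𝔽),
    (isCompact_closedBall (0:ℂ) 1).image (continuous_id.smul continuous_const), ?_⟩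
  refine Filter.mem_of_superset (Metric.ball_mem_nhds 0 zero_lt_one) ?_
  intro f hf
  refine ⟨f ν, ?_, rfl⟩
  have h1 : ‖f ν‖ ≤ ‖f‖ := lp.norm_apply_le_norm (by norm_num) f ν
  have h2 : ‖f‖ < 1 := by simpa [Metric.mem_ball] using hf
  simp only [Metric.mem_closedBall, dist_zero_right]
  exact h1.trans h2.le

end DeltaAuxFock

open DeltaAuxFock

set_option maxHeartbeats 1000000

/-- On full Fock space over an `n`-dimensional Hilbert space (realized as `ℓ²` of words
over `Fin n`), with `l(v i)` the left creation operators, `δ = id - β`, and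
`β(A) = ∑ i, r(v i) A r(v i)*`, one has
`δ(l(v_{i₁})⋯l(v_{i_k}) l(v_{j_l})*⋯l(v_{j_1})*) = |v_μ⟩⟨v_ν|`, the rank-one operator
`f ↦ ⟨f, v_ν⟩ v_μ`.  In particular, `δ` maps the star algebra generated by the left
creation operators into the compact operators. -/
theorem delta_monomial_rankOne
    {n : ℕ}
    (L R : Fin n → (lp (fun _ : List (Fin n) => ℂ) 2 →L[ℂ] lp (fun _ : List (Fin n) => ℂ) 2))
    (hL_nil : ∀ i f, L i f ([] : List (Fin n)) = 0)
    (hL_cons : ∀ i f (j : Fin n) (t : List (Fin n)),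
      L i f (j :: t) = if j = i then f t else 0)
    (hR_nil : ∀ i f, R i f ([] : List (Fin n)) = 0)
    (hR_concat : ∀ i f (t : List (Fin n)) (j : Fin n),
      R i f (t ++ [j]) = if j = i then f t else 0) :
    (∀ (μ ν : List (Fin n)) (f : lp (fun _ : List (Fin n) => ℂ) 2) (w : List (Fin n)),
      (((μ.map L).prod * ContinuousLinearMap.adjoint ((ν.map L).prod)
          - ∑ l, (R l) ∘L ((μ.map L).prod * ContinuousLinearMap.adjoint ((ν.map L).prod))
              ∘L (ContinuousLinearMap.adjoint (R l))) f) w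
        = if w = μ then f ν else 0) ∧
    (∀ X ∈ StarAlgebra.adjoin ℂ (Set.range L),
      IsCompactOperator
        (X - ∑ l, (R l) ∘L X ∘L (ContinuousLinearMap.adjoint (R l)))) := by
  -- value of the monomial composed with adjoint of R l etc.
  have hA : ∀ (μ ν : List (Fin n)) (g : lp (fun _ : List (Fin n) => ℂ) 2) (u : List (Fin n)),
      (((μ.map L).prod * ContinuousLinearMap.adjoint ((ν.map L).prod)) g) u
        = if μ <+: u then g (ν ++ u.drop μ.length) else 0 := by
    intro μ ν g u
    rw [ContinuousLinearMap.mul_apply, P_apply L hL_nil hL_cons]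
    split_ifs with h
    · rw [adjP_apply L hL_nil hL_cons]
    · rfl
  have part1 : ∀ (μ ν : List (Fin n)) (f : lp (fun _ : List (Fin n) => ℂ) 2)
      (w : List (Fin n)),
      (((μ.map L).prod * ContinuousLinearMap.adjoint ((ν.map L).prod)
          - ∑ l, (R l) ∘L ((μ.map L).prod * ContinuousLinearMap.adjoint ((ν.map L).prod))
              ∘L (ContinuousLinearMap.adjoint (R l))) f) w
        = if w = μ then f ν else 0 := by
    intro μ ν f w
    rw [ContinuousLinearMap.sub_apply, lp.coeFn_sub, Pi.sub_apply,
      ContinuousLinearMap.sum_apply, lp.coeFn_sum, Finset.sum_apply]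
    simp only [ContinuousLinearMap.comp_apply]
    rcases List.eq_nil_or_concat w with rfl | ⟨t, j, rfl⟩
    · simp only [hR_nil, Finset.sum_const_zero, sub_zero, hA]
      by_cases hμ : μ = []
      · subst hμ; simp
      · rw [if_neg (by simpa [List.prefix_nil] using hμ), if_neg (fun h => hμ h.symm)]
    · rw [List.concat_eq_append]
      simp only [hR_concat]
      rw [Finset.sum_ite_eq, if_pos (Finset.mem_univ j), hA, hA,
        adjR_apply R hR_nil hR_concat]
      by_cases h1 : μ <+: t
      · have h2 : μ <+: t ++ [j] := h1.trans (List.prefix_append t [j])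
        have h3 : μ.length ≤ t.length := h1.length_le
        rw [if_pos h2, if_pos h1, List.drop_append_of_le_length h3, if_neg, ← List.append_assoc,
          sub_self]
        intro h
        rw [← h] at h3
        simp at h3
      · by_cases h2 : t ++ [j] = μ
        · subst h2
          rw [if_pos (List.prefix_refl _), if_neg h1, List.drop_length, if_pos rfl,
            List.append_nil, sub_zero]
        · have h4 : ¬ μ <+: t ++ [j] := by
            intro h
            rcases lt_or_eq_of_le h.length_le with hlt | heq
            · have hle : μ.length ≤ t.length := by
                simp only [List.length_append, List.length_cons, List.length_nil] at hlt
                omega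
              exact h1 (List.prefix_of_prefix_length_le h (List.prefix_append t [j]) hle)
            · exact h2 ((h.eq_of_length heq).symm)
          rw [if_neg h4, if_neg h1, if_neg (fun h => h2 h), sub_zero]
  refine ⟨part1, ?_⟩
  -- Part 2: compactness on the star algebra
  set β : (lp (fun _ : List (Fin n) => ℂ) 2 →L[ℂ] lp (fun _ : List (Fin n) => ℂ) 2) →
      (lp (fun _ : List (Fin n) => ℂ) 2 →L[ℂ] lp (fun _ : List (Fin n) => ℂ) 2) :=
    fun X => ∑ l, R l * X * ContinuousLinearMap.adjoint (R l) with hβ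
  have hcomp : ∀ X, (∑ l, (R l) ∘L X ∘L (ContinuousLinearMap.adjoint (R l))) = β X := by
    intro X
    refine Finset.sum_congr rfl fun l _ => ?_
    rw [mul_assoc]
    rfl
  have hβ_mul : ∀ X Y, β X * β Y = β (X * Y) := by
    intro X Y
    have key : ∀ l m : Fin n,
        (R l * X * ContinuousLinearMap.adjoint (R l)) *
          (R m * Y * ContinuousLinearMap.adjoint (R m))
          = if l = m then R l * (X * Y) * ContinuousLinearMap.adjoint (R m) else 0 := by
      intro l m
      have hstep : (R l * X * ContinuousLinearMap.adjoint (R l)) *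
          (R m * Y * ContinuousLinearMap.adjoint (R m))
          = R l * X * ((ContinuousLinearMap.adjoint (R l) * R m) *
              (Y * ContinuousLinearMap.adjoint (R m))) := by
        simp only [mul_assoc]
      rw [hstep, adjR_mul_R R hR_nil hR_concat]
      by_cases hlm : l = m
      · subst hlm
        rw [if_pos rfl, if_pos rfl, one_mul]
        simp only [mul_assoc]
      · rw [if_neg hlm, if_neg hlm, zero_mul, mul_zero]
    rw [hβ]
    simp only
    rw [Finset.sum_mul_sum]
    calc (∑ l, ∑ m, (R l * X * ContinuousLinearMap.adjoint (R l)) *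
            (R m * Y * ContinuousLinearMap.adjoint (R m)))
        = ∑ l, ∑ m, if l = m then R l * (X * Y) * ContinuousLinearMap.adjoint (R m) else 0 := by
          refine Finset.sum_congr rfl fun l _ => Finset.sum_congr rfl fun m _ => key l m
      _ = ∑ l, R l * (X * Y) * ContinuousLinearMap.adjoint (R l) := by
          refine Finset.sum_congr rfl fun l _ => ?_
          rw [Finset.sum_ite_eq, if_pos (Finset.mem_univ l)]
  -- compactness of the basic monomial differences
  have hcpt : ∀ μ ν : List (Fin n),
      IsCompactOperator
        ⇑((μ.map L).prod * ContinuousLinearMap.adjoint ((ν.map L).prod)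
          - β ((μ.map L).prod * ContinuousLinearMap.adjoint ((ν.map L).prod))) := by
    intro μ ν
    have heq : ⇑((μ.map L).prod * ContinuousLinearMap.adjoint ((ν.map L).prod)
          - β ((μ.map L).prod * ContinuousLinearMap.adjoint ((ν.map L).prod)))
        = fun f => f ν • lp.single 2 μ (1:ℂ) := by
      funext f
      apply lp.ext; funext w
      have := part1 μ ν f w
      rw [hcomp] at this
      rw [this, lp.coeFn_smul, Pi.smul_apply]
      by_cases h : w = μ
      · subst h; rw [if_pos rfl, lp.single_apply_self, smul_eq_mul, mul_one]
      · rw [if_neg h, lp.single_apply_ne _ _ _ h, smul_zero]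
    rw [heq]
    exact rankOne_compact ν μ
  intro X hX
  rw [hcomp]
  -- reduce to induction over the (non-star) algebra generated by L's and their adjoints
  have hX' : X ∈ Algebra.adjoin ℂ (Set.range L ∪ star (Set.range L)) := hX
  have hadj1 : ContinuousLinearMap.adjoint
      (1 : lp (fun _ : List (Fin n) => ℂ) 2 →L[ℂ] lp (fun _ : List (Fin n) => ℂ) 2) = 1 := by
    rw [← ContinuousLinearMap.star_eq_adjoint]
    exact star_one _
  refine Algebra.adjoin_induction
    (p := fun Y _ => IsCompactOperator ⇑(Y - β Y)) ?_ ?_ ?_ ?_ hX'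
  · -- generators
    rintro x (⟨i, rfl⟩ | hx)
    · have h : L i = (([i] : List (Fin n)).map L).prod *
          ContinuousLinearMap.adjoint ((([] : List (Fin n)).map L).prod) := by
        simp [hadj1]
      rw [h]
      exact hcpt [i] []
    · rw [Set.mem_star] at hx
      obtain ⟨i, hi⟩ := hx
      have hxi : x = ContinuousLinearMap.adjoint (L i) := by
        rw [← ContinuousLinearMap.star_eq_adjoint, hi, star_star]
      have h : x = (([] : List (Fin n)).map L).prod *
          ContinuousLinearMap.adjoint ((([i] : List (Fin n)).map L).prod) := by
        simp [hxi]
      rw [h]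
      exact hcpt [] [i]
  · -- algebraMap
    intro r
    have h1 : algebraMap ℂ _ r = r • (1 : lp (fun _ : List (Fin n) => ℂ) 2 →L[ℂ]
        lp (fun _ : List (Fin n) => ℂ) 2) := Algebra.algebraMap_eq_smul_one r
    have hβ1 : β (r • (1 : lp (fun _ : List (Fin n) => ℂ) 2 →L[ℂ]
        lp (fun _ : List (Fin n) => ℂ) 2)) = r • β 1 := by
      rw [hβ]
      simp only [Finset.smul_sum, mul_smul_comm, smul_mul_assoc]
    have h2 : algebraMap ℂ _ r - β (algebraMap ℂ _ r) = r • ((1 : lp (fun _ : List (Fin n) => ℂ) 2 →L[ℂ]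
        lp (fun _ : List (Fin n) => ℂ) 2) - β 1) := by
      rw [h1, hβ1, smul_sub]
    rw [h2]
    have hone : (1 : lp (fun _ : List (Fin n) => ℂ) 2 →L[ℂ]
        lp (fun _ : List (Fin n) => ℂ) 2) = (([] : List (Fin n)).map L).prod *
          ContinuousLinearMap.adjoint ((([] : List (Fin n)).map L).prod) := by simp [hadj1]
    have hc : IsCompactOperator ⇑((1 : lp (fun _ : List (Fin n) => ℂ) 2 →L[ℂ]
        lp (fun _ : List (Fin n) => ℂ) 2) - β 1) := by
      rw [hone]; exact hcpt [] []
    have hcoe : ⇑(r • ((1 : lp (fun _ : List (Fin n) => ℂ) 2 →L[ℂ]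
        lp (fun _ : List (Fin n) => ℂ) 2) - β 1)) = r • ⇑((1 : lp (fun _ : List (Fin n) => ℂ) 2 →L[ℂ]
        lp (fun _ : List (Fin n) => ℂ) 2) - β 1) := rfl
    rw [hcoe]
    exact hc.smul r
  · -- addition
    intro x y _ _ hx hy
    have hβadd : β (x + y) = β x + β y := by
      rw [hβ]
      simp only [mul_add, add_mul, Finset.sum_add_distrib]
    have h : x + y - β (x + y) = (x - β x) + (y - β y) := by
      rw [hβadd]; abel
    have hcoe : ⇑((x - β x) + (y - β y)) = ⇑(x - β x) + ⇑(y - β y) := rfl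
    rw [h, hcoe]
    exact hx.add hy
  · -- multiplication
    intro x y _ _ hx hy
    have h : x * y - β (x * y) = (x - β x) * y + β x * (y - β y) := by
      rw [← hβ_mul, sub_mul, mul_sub]; abel
    have hcoe : ⇑((x - β x) * y + β x * (y - β y))
        = (⇑(x - β x) ∘ ⇑y) + (⇑(β x) ∘ ⇑(y - β y)) := rfl
    rw [h, hcoe]
    exact (hx.comp_clm y).add (hy.clm_comp (β x))
end
end
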